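/- arXiv:1805.06421 — 3 statements merged into one kernel-verified Lean document; each statement's English description precedes it below -/
import Mathlib

section
/- For all b > 1, the function x^*(β_c) = (β_c - b + sqrt((β_c + b)^2 - 4β_c))/(2β_c) is strictly increasing in β_c on (0, ∞); equivalently, its derivative equals (β_c(β_c + b - 2) + b·sqrt(Δ) - Δ)/(2 sqrt(Δ) β_c^2) and is positive. -/
/-! Since `Δ = (β + b - 2)² + 4(b - 1) > 0`, `x^*` is differentiable away from `β = 0`, and the
quotient rule gives the stated formula for its derivative. The numerator of that formula is
positive because `b √Δ > βb + b² - 2β`, which follows from the identity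
`b²Δ - (βb + b² - 2β)² = 4β²(b - 1)`. A positive derivative on the interval `(0, ∞)` makes `x^*`
strictly increasing there. -/

open Real Set

noncomputable section

def xStarDisc (b β : ℝ) : ℝ := (β + b) ^ 2 - 4 * β

def xStar (b β : ℝ) : ℝ := (β - b + √(xStarDisc b β)) / (2 * β)

def xStarDeriv (b β : ℝ) : ℝ :=
  (β * (β + b - 2) + b * √(xStarDisc b β) - xStarDisc b β) / (2 * √(xStarDisc b β) * β ^ 2)

end

variable {b β : ℝ}

lemma xStarDisc_eq (b β : ℝ) : xStarDisc b β = (β + b - 2) ^ 2 + 4 * (b - 1) := by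
  unfold xStarDisc; ring

lemma xStarDisc_pos (hb : 1 < b) (β : ℝ) : 0 < xStarDisc b β := by
  rw [xStarDisc_eq]; nlinarith [sq_nonneg (β + b - 2)]

lemma hasDerivAt_xStarDisc (b β : ℝ) : HasDerivAt (xStarDisc b) (2 * (β + b) - 4) β := by
  have h := (((hasDerivAt_id β).add_const b).pow 2).sub ((hasDerivAt_id β).const_mul 4)
  exact h.congr_deriv (by simp)

lemma hasDerivAt_xStar (hΔ : 0 < xStarDisc b β) (hβ : β ≠ 0) :
    HasDerivAt (xStar b) (xStarDeriv b β) β := by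
  have hs_sq : √(xStarDisc b β) ^ 2 = xStarDisc b β := sq_sqrt hΔ.le
  have hnum : HasDerivAt (fun y => y - b + √(xStarDisc b y))
      (1 + (2 * (β + b) - 4) / (2 * √(xStarDisc b β))) β :=
    ((hasDerivAt_id β).sub_const b).add ((hasDerivAt_xStarDisc b β).sqrt hΔ.ne')
  have hden : HasDerivAt (fun y : ℝ => 2 * y) 2 β := by
    simpa using (hasDerivAt_id β).const_mul 2
  refine (hnum.div hden (mul_ne_zero two_ne_zero hβ)).congr_deriv ?_
  unfold xStarDeriv
  field_simp
  rw [xStarDisc] at hs_sq ⊢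
  linear_combination -2 * hs_sq

lemma lt_mul_sqrt_xStarDisc (hb : 1 < b) (hβ : β ≠ 0) :
    β * b + b ^ 2 - 2 * β < b * √(xStarDisc b β) := by
  have hΔ := xStarDisc_pos hb β
  have hgap : (b * √(xStarDisc b β)) ^ 2 - (β * b + b ^ 2 - 2 * β) ^ 2 = 4 * β ^ 2 * (b - 1) := by
    rw [mul_pow, sq_sqrt hΔ.le, xStarDisc]; ring
  have hgap_pos : 0 < 4 * β ^ 2 * (b - 1) := by have := sub_pos.mpr hb; positivity
  exact lt_of_pow_lt_pow_left₀ 2 (by have := sqrt_pos.mpr hΔ; positivity) (by linarith)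

lemma xStarDeriv_pos (hb : 1 < b) (hβ : β ≠ 0) : 0 < xStarDeriv b β := by
  have hs : 0 < √(xStarDisc b β) := sqrt_pos.mpr (xStarDisc_pos hb β)
  have hnum : 0 < β * (β + b - 2) + b * √(xStarDisc b β) - xStarDisc b β := by
    have := lt_mul_sqrt_xStarDisc hb hβ
    rw [xStarDisc] at this ⊢
    linarith
  unfold xStarDeriv
  positivity

lemma strictMonoOn_xStar (hb : 1 < b) : StrictMonoOn (xStar b) (Ioi 0) := by
  have hderiv : ∀ β ∈ Ioi (0 : ℝ), HasDerivAt (xStar b) (xStarDeriv b β) β :=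
    fun β hβ => hasDerivAt_xStar (xStarDisc_pos hb β) (ne_of_gt hβ)
  refine strictMonoOn_of_hasDerivWithinAt_pos (f' := xStarDeriv b) (convex_Ioi 0)
    (fun β hβ => (hderiv β hβ).continuousAt.continuousWithinAt) ?_ ?_ <;> rw [interior_Ioi]
  · exact fun β hβ => (hderiv β hβ).hasDerivWithinAt
  · exact fun β hβ => xStarDeriv_pos hb (ne_of_gt hβ)

/-- For all `b > 1`, the function `x^*(βc) = (βc - b + sqrt((βc + b)^2 - 4βc))/(2βc)`
is strictly increasing in `βc` on `(0, ∞)`; equivalently, its derivative equals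
`(βc(βc + b - 2) + b·sqrt Δ - Δ)/(2 sqrt Δ βc^2)` and is positive. -/
theorem stmt5 (b : ℝ) (hb : 1 < b) :
    StrictMonoOn (fun βc : ℝ => (βc - b + Real.sqrt ((βc + b) ^ 2 - 4 * βc)) / (2 * βc))
      (Set.Ioi 0) ∧
    ∀ βc : ℝ, 0 < βc →
      HasDerivAt (fun βc : ℝ => (βc - b + Real.sqrt ((βc + b) ^ 2 - 4 * βc)) / (2 * βc))
        ((βc * (βc + b - 2) + b * Real.sqrt ((βc + b) ^ 2 - 4 * βc) -
            ((βc + b) ^ 2 - 4 * βc)) /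
          (2 * Real.sqrt ((βc + b) ^ 2 - 4 * βc) * βc ^ 2)) βc ∧
      0 < (βc * (βc + b - 2) + b * Real.sqrt ((βc + b) ^ 2 - 4 * βc) -
            ((βc + b) ^ 2 - 4 * βc)) /
          (2 * Real.sqrt ((βc + b) ^ 2 - 4 * βc) * βc ^ 2) :=
  ⟨strictMonoOn_xStar hb, fun _ hβ =>
    ⟨hasDerivAt_xStar (xStarDisc_pos hb _) hβ.ne', xStarDeriv_pos hb hβ.ne'⟩⟩
end

section
/- For all b > 1, the function φ(β_c) = 2β_c/(β_c + b - sqrt((β_c + b)^2 - 4β_c)) - b is nondecreasing on (0, ∞). -/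
lemma stmt6_aux (b x : ℝ) (hb : 1 < b) (hx : 0 < x) :
    2 * x / (x + b - Real.sqrt ((x + b) ^ 2 - 4 * x))
      = (x + b + Real.sqrt ((x + b) ^ 2 - 4 * x)) / 2 := by
  set s := Real.sqrt ((x + b) ^ 2 - 4 * x) with hs
  have hΔ : 0 ≤ (x + b) ^ 2 - 4 * x := by nlinarith [sq_nonneg (x + b - 2)]
  have hs2 : s ^ 2 = (x + b) ^ 2 - 4 * x := Real.sq_sqrt hΔ
  have hs0 : 0 ≤ s := Real.sqrt_nonneg _
  have hlt : s < x + b := by nlinarith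
  have hpos : 0 < x + b - s := by linarith
  rw [div_eq_div_iff hpos.ne' two_ne_zero]
  linear_combination hs2

/-- For all `b > 1`, the function
`φ(βc) = 2βc/(βc + b - sqrt((βc + b)^2 - 4βc)) - b` is nondecreasing on `(0, ∞)`. -/
theorem stmt6 (b : ℝ) (hb : 1 < b) :
    MonotoneOn
      (fun βc : ℝ => 2 * βc / (βc + b - Real.sqrt ((βc + b) ^ 2 - 4 * βc)) - b)
      (Set.Ioi 0) := by
  intro x hx y hy hxy
  simp only [Set.mem_Ioi] at hx hy
  simp only
  rw [stmt6_aux b x hb hx, stmt6_aux b y hb hy]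
  set sx := Real.sqrt ((x + b) ^ 2 - 4 * x) with hsx
  set sy := Real.sqrt ((y + b) ^ 2 - 4 * y) with hsy
  have hΔx : 0 ≤ (x + b) ^ 2 - 4 * x := by nlinarith [sq_nonneg (x + b - 2)]
  have hΔy : 0 ≤ (y + b) ^ 2 - 4 * y := by nlinarith [sq_nonneg (y + b - 2)]
  have hsx2 : sx ^ 2 = (x + b) ^ 2 - 4 * x := Real.sq_sqrt hΔx
  have hsy2 : sy ^ 2 = (y + b) ^ 2 - 4 * y := Real.sq_sqrt hΔy
  have hsx0 : 0 ≤ sx := Real.sqrt_nonneg _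
  have hsy0 : 0 ≤ sy := Real.sqrt_nonneg _
  have hyb : 2 - b - y ≤ sy := by
    have h1 : (y + b - 2) ^ 2 ≤ (y + b) ^ 2 - 4 * y := by nlinarith
    have h2 := Real.sqrt_le_sqrt h1
    rw [Real.sqrt_sq_eq_abs] at h2
    have := neg_abs_le (y + b - 2)
    linarith
  have hkey : 0 ≤ (y - x) * (sy - (2 - b - y)) :=
    mul_nonneg (by linarith) (by linarith)
  have hnn : 0 ≤ y - x + sy := by linarith
  nlinarith [hsx2, hsy2, hsx0, hsy0, hkey, hnn, sq_nonneg (y - x + sy - sx)]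
end

section
/- With the Dulac function h(x,y) = 1/(x^2 y), for the vector field f(x,y) = (b + β_c x)(1 - x - y)x - x and g(x,y) = (b + β_d)(1 - x - y)y - y with b > 1 and β_c, β_d ≥ 0, the divergence ∂(hf)/∂x + ∂(hg)/∂y equals -(β_c x^2 + β_d y + (b-1))/(x^2 y) and is strictly negative at every point with x > 0, y > 0. -/
/-!
Multiplying by `h = 1/(x²y)` cancels the factor `x` of `f` and the factor `y` of `g`, so
`∂(hf)/∂x = -(βc x² + b(1 - y) - 1)/(x²y)` and `∂(hg)/∂y = -(b + βd)/x²`. In their sum the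
terms `± b y` cancel, leaving `-(βc x² + βd y + (b - 1))/(x²y)`, whose numerator is positive
as soon as `b > 1`.
-/

theorem hasDerivAt_dulac_mul_f (b βc y x : ℝ) (hx : x ≠ 0) (hy : y ≠ 0) :
    HasDerivAt (fun u : ℝ => (1 / (u ^ 2 * y)) * ((b + βc * u) * (1 - u - y) * u - u))
      (-((βc * x ^ 2 + b * (1 - y) - 1) / (x ^ 2 * y))) x := by
  have hid := hasDerivAt_id' x
  have hh := (hasDerivAt_const x (1 : ℝ)).fun_div ((hasDerivAt_pow 2 x).mul_const y)
    (by positivity)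
  have hf := (((hid.const_mul βc).const_add b).fun_mul ((hid.const_sub 1).sub_const y)).fun_mul
    hid |>.fun_sub hid
  exact (hh.fun_mul hf).congr_deriv (by field_simp; ring)

theorem hasDerivAt_dulac_mul_g (b βd x y : ℝ) (hx : x ≠ 0) (hy : y ≠ 0) :
    HasDerivAt (fun v : ℝ => (1 / (x ^ 2 * v)) * ((b + βd) * (1 - x - v) * v - v))
      (-((b + βd) / x ^ 2)) y := by
  have hid := hasDerivAt_id' y
  have hh := (hasDerivAt_const y (1 : ℝ)).fun_div (hid.const_mul (x ^ 2)) (by positivity)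
  have hg := ((hid.const_sub (1 - x)).const_mul (b + βd)).fun_mul hid |>.fun_sub hid
  exact (hh.fun_mul hg).congr_deriv (by field_simp; ring)

/-- With the Dulac function `h(x,y) = 1/(x^2 y)`, for the mean-field vector field
`f(x,y) = (b + βc x)(1 - x - y)x - x`, `g(x,y) = (b + βd)(1 - x - y)y - y` with `b > 1`
and `βc, βd ≥ 0`, the divergence `∂(hf)/∂x + ∂(hg)/∂y` equals
`-(βc x^2 + βd y + (b-1))/(x^2 y)` and is strictly negative at every point with
`x > 0`, `y > 0`. -/
theorem stmt13 (b βc βd x y : ℝ) (hb : 1 < b) (hβc : 0 ≤ βc) (hβd : 0 ≤ βd)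
    (hx : 0 < x) (hy : 0 < y) :
    ∃ Dx Dy : ℝ,
      HasDerivAt (fun u : ℝ => (1 / (u ^ 2 * y)) * ((b + βc * u) * (1 - u - y) * u - u)) Dx x ∧
      HasDerivAt (fun v : ℝ => (1 / (x ^ 2 * v)) * ((b + βd) * (1 - x - v) * v - v)) Dy y ∧
      Dx + Dy = -((βc * x ^ 2 + βd * y + (b - 1)) / (x ^ 2 * y)) ∧
      Dx + Dy < 0 := by
  have hdiv : -((βc * x ^ 2 + b * (1 - y) - 1) / (x ^ 2 * y)) + -((b + βd) / x ^ 2)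
      = -((βc * x ^ 2 + βd * y + (b - 1)) / (x ^ 2 * y)) := by
    field_simp
    ring
  have hnum : 0 < βc * x ^ 2 + βd * y + (b - 1) := by
    have := mul_nonneg hβc (sq_nonneg x)
    have := mul_nonneg hβd hy.le
    linarith
  refine ⟨_, _, hasDerivAt_dulac_mul_f b βc y x hx.ne' hy.ne',
    hasDerivAt_dulac_mul_g b βd x y hx.ne' hy.ne', hdiv, ?_⟩
  rw [hdiv]
  exact neg_neg_of_pos (div_pos hnum (by positivity))
end
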